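/- In an alternating square PQRS of the pants graph, opposite vertices differ by exactly two curves, and the square is determined by its three vertices P, Q, R: if P = {α₁, α₂, α₃,...,αₙ}, Q = {α₁, α₂', α₃,...,αₙ}, R = {α₁', α₂', α₃,...,αₙ}, then necessarily S = {α₁', α₂, α₃,...,αₙ}. -/

import Mathlib

open scoped Classical

/-- An abstract model of the pants graph data of a surface `S`: the isotopy
classes of essential non-peripheral simple closed curves with geometric
intersection number, the number `n = 3g - 3 + r` of curves in a pants
decomposition, and the predicate of being a pants decomposition. -/
structure PantsGraphModel where
  Curve : Type
  inter : Curve → Curve → ℕ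
  inter_symm : ∀ a b, inter a b = inter b a
  n : ℕ
  IsPants : Finset Curve → Prop
  pants_card : ∀ P, IsPants P → P.card = n
  pants_disjoint : ∀ P, IsPants P → ∀ a ∈ P, ∀ b ∈ P, a ≠ b → inter a b = 0

/-- An elementary move between two pants decompositions: they share `n - 1`
curves and the two exchanged curves intersect (minimally). This is the edge
relation of the pants graph. -/
def ElemMove (M : PantsGraphModel) (P Q : Finset M.Curve) : Prop :=
  M.IsPants P ∧ M.IsPants Q ∧ P ≠ Q ∧ (P ∩ Q).card = M.n - 1 ∧
    ∀ a ∈ P \ Q, ∀ b ∈ Q \ P, 0 < M.inter a b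

/-- Three consecutive vertices of a loop are alternating if the corresponding
pants decompositions do not share `n - 1` common curves (equivalently, the two
edges do not lie in a common Farey graph of the pants graph). -/
def AltTriple (M : PantsGraphModel) (P Q R : Finset M.Curve) : Prop :=
  (P ∩ Q ∩ R).card < M.n - 1

/-- An alternating square: a 4-cycle in the pants graph, no three consecutive
vertices of which share `n - 1` curves. -/
def IsAltSquare (M : PantsGraphModel) (P Q R S : Finset M.Curve) : Prop :=
  ElemMove M P Q ∧ ElemMove M Q R ∧ ElemMove M R S ∧ ElemMove M S P ∧
  AltTriple M P Q R ∧ AltTriple M Q R S ∧ AltTriple M R S P ∧ AltTriple M S P Q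

/- Two consecutive moves `P → Q → R` of an alternating path exchange different curves
of `Q`, so each curve of `Q` survives in `P` or in `R`. Conversely a curve `z` of `P` and `R` lies
in `Q`: otherwise `z` is the curve removed from `P`, it meets the curve `b ∈ Q ∩ R` added to `P`,
and `z, b` would be two intersecting curves of the pants decomposition `R`. Applying these two facts
to the four triples of the square pins down `P ∩ R = P ∩ Q ∩ R`, `Q ∩ S = P ∩ Q ∩ R`, and
`S ⊆ (P \ Q) ∪ (R \ Q) ∪ (P ∩ Q ∩ R)`; the latter set has at most `n` elements, so it is `S`. -/

theorem Finset.subset_union_of_card_sdiff_le_one {α : Type*} [DecidableEq α] {P Q R : Finset α}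
    (hQP : (Q \ P).card ≤ 1) (hQR : ¬ Q ∩ R ⊆ P) : Q ⊆ P ∪ R := by
  obtain ⟨b, hbQR, hbP⟩ := Finset.not_subset.mp hQR
  have hbQ : b ∈ Q \ P := Finset.mem_sdiff.mpr ⟨(Finset.mem_inter.mp hbQR).1, hbP⟩
  intro z hzQ
  by_cases hzP : z ∈ P
  · exact Finset.mem_union_left R hzP
  · have hzb : z = b := Finset.card_le_one.mp hQP z (Finset.mem_sdiff.mpr ⟨hzQ, hzP⟩) b hbQ
    exact Finset.mem_union_right P (hzb ▸ (Finset.mem_inter.mp hbQR).2)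

namespace ElemMove

variable {M : PantsGraphModel} {P Q : Finset M.Curve}

theorem card_sdiff_le_one_left (h : ElemMove M P Q) : (P \ Q).card ≤ 1 := by
  have hP := M.pants_card P h.1
  have hPQ := h.2.2.2.1
  have hsplit := Finset.card_sdiff_add_card_inter P Q
  omega

theorem card_sdiff_le_one_right (h : ElemMove M P Q) : (Q \ P).card ≤ 1 := by
  have hQ := M.pants_card Q h.2.1
  have hPQ := h.2.2.2.1
  have hsplit := Finset.card_sdiff_add_card_inter Q P
  rw [Finset.inter_comm] at hsplit
  omega

end ElemMove

namespace AltTriple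

variable {M : PantsGraphModel} {P Q R : Finset M.Curve}

theorem two_le_n (h : AltTriple M P Q R) : 2 ≤ M.n := by
  unfold AltTriple at h
  omega

theorem not_inter_subset (hQR : ElemMove M Q R) (h : AltTriple M P Q R) : ¬ Q ∩ R ⊆ P := by
  intro hsub
  have hPQR : P ∩ Q ∩ R = Q ∩ R := by
    rw [Finset.inter_assoc]
    exact Finset.inter_eq_right.mpr hsub
  unfold AltTriple at h
  rw [hPQR, hQR.2.2.2.1] at h
  exact lt_irrefl _ h

theorem subset_union (hPQ : ElemMove M P Q) (hQR : ElemMove M Q R) (h : AltTriple M P Q R) :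
    Q ⊆ P ∪ R :=
  Finset.subset_union_of_card_sdiff_le_one hPQ.card_sdiff_le_one_right (h.not_inter_subset hQR)

theorem inter_subset (hPQ : ElemMove M P Q) (hQR : ElemMove M Q R) (h : AltTriple M P Q R) :
    P ∩ R ⊆ Q := by
  intro z hzPR
  obtain ⟨hzP, hzR⟩ := Finset.mem_inter.mp hzPR
  by_contra hzQ
  obtain ⟨b, hbQR, hbP⟩ := Finset.not_subset.mp (h.not_inter_subset hQR)
  obtain ⟨hbQ, hbR⟩ := Finset.mem_inter.mp hbQR
  have hmeet : 0 < M.inter z b :=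
    hPQ.2.2.2.2 z (Finset.mem_sdiff.mpr ⟨hzP, hzQ⟩) b (Finset.mem_sdiff.mpr ⟨hbQ, hbP⟩)
  have hdisj : M.inter z b = 0 :=
    M.pants_disjoint R hQR.2.1 z hzR b hbR (fun hzb => hzQ (hzb ▸ hbQ))
  omega

theorem inter_inter_eq (hPQ : ElemMove M P Q) (hQR : ElemMove M Q R) (h : AltTriple M P Q R) :
    P ∩ Q ∩ R = P ∩ R := by
  rw [Finset.inter_right_comm]
  exact Finset.inter_eq_left.mpr (h.inter_subset hPQ hQR)

theorem card_inter_inter (hPQ : ElemMove M P Q) (hQR : ElemMove M Q R) (h : AltTriple M P Q R) :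
    (P ∩ Q ∩ R).card = M.n - 2 := by
  have hcover : P ∩ Q ⊆ P ∩ Q ∩ R ∪ Q \ R := by
    intro z hz
    by_cases hzR : z ∈ R
    · exact Finset.mem_union_left _ (Finset.mem_inter.mpr ⟨hz, hzR⟩)
    · exact Finset.mem_union_right _ (Finset.mem_sdiff.mpr ⟨(Finset.mem_inter.mp hz).2, hzR⟩)
  have hle := (Finset.card_le_card hcover).trans (Finset.card_union_le _ _)
  have hcardPQ := hPQ.2.2.2.1
  have hQR1 := hQR.card_sdiff_le_one_left
  unfold AltTriple at h
  omega

end AltTriple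

theorem IsAltSquare.subset_sdiff_union {M : PantsGraphModel} {P Q R S : Finset M.Curve}
    (h : IsAltSquare M P Q R S) : S ⊆ (P \ Q) ∪ (R \ Q) ∪ (P ∩ Q ∩ R) := by
  obtain ⟨hPQ, hQR, hRS, hSP, -, hQRS, hRSP, hSPQ⟩ := h
  intro z hzS
  by_cases hzQ : z ∈ Q
  · have hzR := hQRS.inter_subset hQR hRS (Finset.mem_inter.mpr ⟨hzQ, hzS⟩)
    have hzP := hSPQ.inter_subset hSP hPQ (Finset.mem_inter.mpr ⟨hzS, hzQ⟩)
    simp [hzP, hzQ, hzR]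
  · have hzRP := hRSP.subset_union hRS hSP hzS
    simp only [Finset.mem_union] at hzRP
    simp only [Finset.mem_union, Finset.mem_sdiff, Finset.mem_inter]
    tauto

/-- in an alternating square `PQRS` of the pants graph, opposite
vertices differ by exactly two curves, and the fourth vertex is determined by
the other three: if `P = {α₁, α₂, α₃, …, αₙ}`, `Q = {α₁, α₂', α₃, …, αₙ}`,
`R = {α₁', α₂', α₃, …, αₙ}`, then `S = {α₁', α₂, α₃, …, αₙ}`, i.e.
`S = (P \ Q) ∪ (R \ Q) ∪ (P ∩ Q ∩ R)`. -/
theorem alternating_square_structure (M : PantsGraphModel)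
    (P Q R S : Finset M.Curve) (h : IsAltSquare M P Q R S) :
    (P ∩ R).card = M.n - 2 ∧ (Q ∩ S).card = M.n - 2 ∧
      S = (P \ Q) ∪ (R \ Q) ∪ (P ∩ Q ∩ R) := by
  have hSsub := h.subset_sdiff_union
  obtain ⟨hPQ, hQR, hRS, -, hPQR, hQRS, -, -⟩ := h
  have hcardC := hPQR.card_inter_inter hPQ hQR
  refine ⟨hPQR.inter_inter_eq hPQ hQR ▸ hcardC, ?_, ?_⟩
  · rw [← hQRS.inter_inter_eq hQR hRS]
    exact hQRS.card_inter_inter hQR hRS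
  · refine Finset.eq_of_subset_of_card_le hSsub ?_
    have hcard := (Finset.card_union_le _ _).trans
      (Nat.add_le_add_right (Finset.card_union_le (P \ Q) (R \ Q)) (P ∩ Q ∩ R).card)
    have hPQ1 := hPQ.card_sdiff_le_one_left
    have hRQ1 := hQR.card_sdiff_le_one_right
    have hn := hPQR.two_le_n
    have hcardS := M.pants_card S hRS.2.1
    omega
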